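/- Let n ≥ 3, 2 ≤ r ≤ n−1, and let M be a sparse-paving matroid of rank r on an n-element set S with set of r-circuits C_r. Then |C_r| ≤ (1/(n−r))·C(n, r+1). -/

import Mathlib

/-!
As `M✶` is paving, every cocircuit of `M` has at least `|S| - r` elements, so every set of
more than `r` elements is spanning. The union of two distinct circuits has nullity at least
`2`; so if two `r`-circuits `C₁ ≠ C₂` lay in one `(r+1)`-set, their union would be a spanning
`(r+1)`-set of rank at most `r - 1`. Hence each `(r+1)`-subset of `S` contains at most one
`r`-circuit, while each `r`-circuit lies in exactly `n - r` of them; double counting gives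
`|C_r| (n - r) ≤ C(n, r+1)`.
-/

/-- A circuit of a matroid: a minimal dependent subset of the ground set. -/
def Matroid.IsCircuit' {α : Type*} (M : Matroid α) (C : Set α) : Prop :=
  C ⊆ M.E ∧ ¬ M.Indep C ∧ ∀ D : Set α, D ⊂ C → M.Indep D

/-- A matroid is paving if it has no circuit of cardinality less than its rank
(the common cardinality of its bases). -/
def Matroid.IsPaving {α : Type*} (M : Matroid α) : Prop :=
  ∀ C : Set α, M.IsCircuit' C → ∀ B : Set α, M.IsBase B → B.ncard ≤ C.ncard

/-- The set of matroids of rank `r` on the `n`-element ground set `Fin n`. -/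
def MatroidSet (n r : ℕ) : Set (Matroid (Fin n)) :=
  {M | M.E = Set.univ ∧ ∀ B : Set (Fin n), M.IsBase B → B.ncard = r}

/-- The set of sparse-paving matroids of rank `r` on `Fin n`. -/
def SparseSet (n r : ℕ) : Set (Matroid (Fin n)) :=
  {M | M ∈ MatroidSet n r ∧ M.IsPaving ∧ M✶.IsPaving}

open Finset

namespace Matroid

variable {α : Type*} {M : Matroid α} {B C C₁ C₂ X : Set α}

theorem isCircuit'_iff_isCircuit : M.IsCircuit' C ↔ M.IsCircuit C := by
  rw [isCircuit_iff_forall_ssubset, Dep, IsCircuit']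
  tauto

theorem IsPaving.ncard_le_of_dep [M.Finite] (hM : M.IsPaving) (hB : M.IsBase B) (hX : M.Dep X) :
    B.ncard ≤ X.ncard := by
  obtain ⟨C, hCX, hC⟩ := hX.exists_isCircuit_subset
  exact (hM C (isCircuit'_iff_isCircuit.2 hC) B hB).trans
    (Set.ncard_le_ncard hCX (M.set_finite X hX.subset_ground))

theorem spanning_of_dual_isPaving [M.Finite] (hM : M✶.IsPaving) (hB : M.IsBase B)
    (hXE : X ⊆ M.E) (hBX : B.ncard < X.ncard) : M.Spanning X := by
  by_contra hX
  rw [spanning_iff_compl_coindep, coindep_def, not_indep_iff] at hX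
  have hcard := hM.ncard_le_of_dep hB.compl_isBase_dual hX
  rw [Set.ncard_sdiff hB.subset_ground (M.set_finite B hB.subset_ground),
    Set.ncard_sdiff hXE (M.set_finite X)] at hcard
  have := Set.ncard_le_ncard hXE M.ground_finite
  omega

theorem IsCircuit.exists_isBasis_union_ncard_add_two_le (hC₁ : M.IsCircuit C₁)
    (hC₂ : M.IsCircuit C₂) (hne : C₁ ≠ C₂) (hfin : (C₁ ∪ C₂).Finite) :
    ∃ J, M.IsBasis J (C₁ ∪ C₂) ∧ J.ncard + 2 ≤ (C₁ ∪ C₂).ncard := by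
  obtain ⟨f, hf₁, hf₂⟩ :=
    Set.not_subset.1 fun h ↦ hne (hC₁.eq_of_subset_isCircuit hC₂ h)
  obtain ⟨J, hJ, hfJ⟩ := (hC₁.sdiff_singleton_indep hf₁).subset_isBasis_of_subset
    (Set.sdiff_subset.trans Set.subset_union_left)
    (Set.union_subset hC₁.subset_ground hC₂.subset_ground)
  have hf : f ∉ J := fun hf ↦ hC₁.not_indep <| hJ.indep.subset <| by
    simpa [Set.insert_eq_of_mem hf₁] using Set.insert_subset hf hfJ
  obtain ⟨g, hg₂, hg⟩ := Set.not_subset.1 fun h ↦ hC₂.not_indep (hJ.indep.subset h)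
  have hgf : f ≠ g := by rintro rfl; exact hf₂ hg₂
  have hJ_sub : J ⊆ (C₁ ∪ C₂) \ {f, g} := fun x hx ↦
    ⟨hJ.subset hx, by rintro (rfl | rfl) <;> contradiction⟩
  have hfg : {f, g} ⊆ C₁ ∪ C₂ := Set.pair_subset (.inl hf₁) (.inr hg₂)
  refine ⟨J, hJ, ?_⟩
  have := Set.ncard_le_ncard hJ_sub hfin.sdiff
  rw [Set.ncard_sdiff hfg, Set.ncard_pair hgf] at this
  have := Set.ncard_le_ncard hfg hfin
  rw [Set.ncard_pair hgf] at this
  omega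

theorem IsCircuit.eq_of_dual_isPaving [M.Finite] (hM : M✶.IsPaving) (hB : M.IsBase B)
    (hC₁ : M.IsCircuit C₁) (hC₂ : M.IsCircuit C₂) (hBC₁ : B.ncard ≤ C₁.ncard)
    (hcard : (C₁ ∪ C₂).ncard ≤ B.ncard + 1) : C₁ = C₂ := by
  by_contra hne
  have hfin : (C₁ ∪ C₂).Finite :=
    M.set_finite _ (Set.union_subset hC₁.subset_ground hC₂.subset_ground)
  obtain ⟨J, hJ, hJcard⟩ := hC₁.exists_isBasis_union_ncard_add_two_le hC₂ hne hfin
  have hlt : C₁.ncard < (C₁ ∪ C₂).ncard := Set.ncard_lt_ncard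
    (Set.ssubset_union_left_iff.2 fun h ↦ hne (hC₂.eq_of_subset_isCircuit hC₁ h).symm) hfin
  have hJB : M.IsBase J := hJ.isBase_of_spanning <|
    spanning_of_dual_isPaving hM hB hJ.subset_ground (by omega)
  have := hJB.ncard_eq_ncard_of_isBase hB
  omega

end Matroid

theorem Finset.card_mul_le_choose_of_card_union_le {α : Type*} [Fintype α] [DecidableEq α]
    {𝒜 : Finset (Finset α)} {r : ℕ} (h𝒜 : (𝒜 : Set (Finset α)).Sized r)
    (hsep : ∀ s ∈ 𝒜, ∀ t ∈ 𝒜, #(s ∪ t) ≤ r + 1 → s = t) :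
    #𝒜 * (Fintype.card α - r) ≤ (Fintype.card α).choose (r + 1) := by
  have h := card_mul_le_card_mul (· ⊆ ·) (s := 𝒜) (t := powersetCard (r + 1) univ)
    (m := Fintype.card α - r) (n := 1) (fun s hs ↦ ?_) (fun u hu ↦ ?_)
  · simpa using h
  · rw [← h𝒜 hs, ← card_compl, ← card_image_of_injOn (insert_inj_on' s)]
    refine card_le_card fun u hu ↦ ?_
    obtain ⟨a, ha, rfl⟩ := mem_image.1 hu
    rw [mem_bipartiteAbove, mem_powersetCard, card_insert_of_notMem (mem_compl.1 ha), h𝒜 hs]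
    exact ⟨⟨subset_univ _, rfl⟩, subset_insert a s⟩
  · rw [mem_powersetCard] at hu
    refine card_le_one.2 fun s hs t ht ↦ ?_
    rw [mem_bipartiteBelow] at hs ht
    exact hsep s hs.1 t ht.1 (hu.2 ▸ card_le_card (union_subset hs.2 ht.2))

theorem Set.ncard_setOf_eq_card_filter_finset {α : Type*} [Fintype α] (P : Set α → Prop)
    [DecidablePred fun s : Finset α ↦ P s] :
    {C : Set α | P C}.ncard = #{s : Finset α | P s} := by
  rw [← Set.ncard_coe_finset, ← Set.ncard_image_of_injective _ Finset.coe_injective]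
  congr 1
  ext C
  simp only [coe_filter, Finset.mem_univ, true_and, Set.mem_image, Set.mem_ofPred_eq]
  exact ⟨fun h ↦ ⟨C.toFinite.toFinset, by simpa using h, by simp⟩,
    by rintro ⟨s, hs, rfl⟩; exact hs⟩

theorem stmt10_general (n r : ℕ) (hn : 3 ≤ n) (hrn : r ≤ n - 1)
    (M : Matroid (Fin n)) (hM : M ∈ SparseSet n r) :
    (({C : Set (Fin n) | M.IsCircuit' C ∧ C.ncard = r}).ncard : ℚ)
      ≤ (n.choose (r + 1) : ℚ) / ((n - r : ℕ) : ℚ) := by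
  classical
  obtain ⟨⟨-, hBr⟩, -, hdual⟩ := hM
  obtain ⟨B, hB⟩ := M.exists_isBase
  set 𝒞 : Finset (Finset (Fin n)) := {s | M.IsCircuit' s ∧ #s = r}
  have hsized : (𝒞 : Set (Finset (Fin n))).Sized r := fun s hs ↦ (mem_filter.1 hs).2.2
  have hsep : ∀ s ∈ 𝒞, ∀ t ∈ 𝒞, #(s ∪ t) ≤ r + 1 → s = t := by
    intro s hs t ht hst
    simp only [𝒞, mem_filter, Matroid.isCircuit'_iff_isCircuit] at hs ht
    refine coe_injective <| hs.2.1.eq_of_dual_isPaving hdual hB ht.2.1 ?_ ?_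
    · rw [hBr B hB, Set.ncard_coe_finset, hs.2.2]
    · rwa [← coe_union, Set.ncard_coe_finset, hBr B hB]
  have hcount := card_mul_le_choose_of_card_union_le hsized hsep
  rw [Fintype.card_fin] at hcount
  rw [Set.ncard_setOf_eq_card_filter_finset, le_div_iff₀ (by norm_cast; omega)]
  exact_mod_cast hcount

/-- A sparse-paving matroid of rank `r` on an `n`-set has at most
`C(n,r+1)/(n-r)` circuits of cardinality `r`. -/
theorem stmt10 (n r : ℕ) (hn : 3 ≤ n) (hr2 : 2 ≤ r) (hrn : r ≤ n - 1)
    (M : Matroid (Fin n)) (hM : M ∈ SparseSet n r) :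
    (({C : Set (Fin n) | M.IsCircuit' C ∧ C.ncard = r}).ncard : ℚ)
      ≤ (n.choose (r + 1) : ℚ) / ((n - r : ℕ) : ℚ) :=
  stmt10_general n r hn hrn M hM
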